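/- arXiv:2407.04884 — 6 statements merged into one kernel-verified Lean document; each statement's English description precedes it below -/
import Mathlib

section
/- Let X ∈ ℝ^{n×d} be a data matrix, y ∈ ℝ^n a label vector, λ > 0, and m ∈ ℕ. Then the two minimization problems (i) inf over u_1,…,u_m ∈ ℝ^d and α_1,…,α_m ∈ ℝ of (1/2) ‖Σ_{j=1}^m α_j φ(X u_j) − y‖_2^2 + (λ/2) Σ_{j=1}^m (‖u_j‖_2^4 + α_j^4), and (ii) inf over u_1,…,u_m ∈ ℝ^d and α_1,…,α_m ∈ ℝ of (1/2) ‖Σ_{j=1}^m α_j φ(X u_j) − y‖_2^2 + λ Σ_{j=1}^m ‖u_j‖_2^2 α_j^2 have equal infima. -/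
/-!
Both objectives share the data-fit term. By AM-GM, `2 ‖u‖² α² ≤ ‖u‖⁴ + α⁴`, so the quartic
objective dominates the product objective at every point. Conversely, ReLU is positively
homogeneous, so `(u, α) ↦ (c • u, α / c)` with `c² = |α| / ‖u‖` leaves the network unchanged
and makes `‖c • u‖² = |α / c|`, where AM-GM is an equality: every value of the product
objective is attained by the quartic one.
-/

open scoped BigOperators Matrix

theorem exists_smul_eq_and_norm_pow_four_add_pow_four {E F : Type*} [NormedAddCommGroup E]
    [NormedSpace ℝ E] [AddCommGroup F] [Module ℝ F] {g : E → F}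
    (hg : ∀ c : ℝ, 0 ≤ c → ∀ u, g (c • u) = c • g u) (u : E) (a : ℝ) :
    ∃ (v : E) (b : ℝ), b • g v = a • g u ∧ ‖v‖ ^ 4 + b ^ 4 = 2 * (‖u‖ ^ 2 * a ^ 2) := by
  by_cases hdeg : a = 0 ∨ u = 0
  · refine ⟨0, 0, ?_, ?_⟩
    · rcases hdeg with rfl | rfl
      · simp
      · have hg0 : g 0 = 0 := by simpa using hg 0 le_rfl 0
        simp [hg0]
    · rcases hdeg with rfl | rfl <;> simp
  push Not at hdeg
  obtain ⟨ha, hu⟩ := hdeg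
  have hu' : 0 < ‖u‖ := norm_pos_iff.mpr hu
  set c := Real.sqrt (|a| / ‖u‖)
  have hc : 0 < c := Real.sqrt_pos.mpr (by positivity)
  have hc4 : c ^ 4 = a ^ 2 / ‖u‖ ^ 2 := by
    rw [show c ^ 4 = (c ^ 2) ^ 2 by ring, Real.sq_sqrt (by positivity), div_pow, sq_abs]
  refine ⟨c • u, a / c, ?_, ?_⟩
  · rw [hg c hc.le, smul_smul, div_mul_cancel₀ a hc.ne']
  · rw [norm_smul, Real.norm_of_nonneg hc.le, mul_pow, div_pow, hc4]
    field_simp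
    ring

def reluLayer {ι κ : Type*} [Fintype κ] (X : Matrix ι κ ℝ) (u : EuclideanSpace ℝ κ) : ι → ℝ :=
  fun k => max 0 ((X *ᵥ u) k)

theorem reluLayer_smul {ι κ : Type*} [Fintype κ] (X : Matrix ι κ ℝ) {c : ℝ} (hc : 0 ≤ c)
    (u : EuclideanSpace ℝ κ) : reluLayer X (c • u) = c • reluLayer X u := by
  ext k
  simp [reluLayer, Matrix.mulVec_smul, mul_max_of_nonneg _ _ hc]

/-- The quartically regularized two-layer ReLU problem and the problem with
regularizer `lam * ∑ j, ‖u j‖² * (α j)²` have equal infima. -/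
theorem stmt_3 (n d m : ℕ) (X : Matrix (Fin n) (Fin d) ℝ) (y : Fin n → ℝ)
    (lam : ℝ) (hlam : 0 < lam) :
    sInf {L : ℝ | ∃ (u : Fin m → EuclideanSpace ℝ (Fin d)) (α : Fin m → ℝ),
        L = (1 / 2) * ∑ k, ((∑ j, α j * max 0 (X.mulVec (u j) k)) - y k) ^ 2
            + (lam / 2) * ∑ j, (‖u j‖ ^ 4 + (α j) ^ 4)} =
    sInf {L : ℝ | ∃ (u : Fin m → EuclideanSpace ℝ (Fin d)) (α : Fin m → ℝ),
        L = (1 / 2) * ∑ k, ((∑ j, α j * max 0 (X.mulVec (u j) k)) - y k) ^ 2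
            + lam * ∑ j, ‖u j‖ ^ 2 * (α j) ^ 2} := by
  apply csInf_eq_csInf_of_forall_exists_le
  · rintro _ ⟨u, α, rfl⟩
    refine ⟨_, ⟨u, α, rfl⟩, ?_⟩
    have amgm : ∑ j, ‖u j‖ ^ 2 * α j ^ 2 ≤ (1 / 2) * ∑ j, (‖u j‖ ^ 4 + α j ^ 4) := by
      rw [Finset.mul_sum]
      exact Finset.sum_le_sum fun j _ => by nlinarith [sq_nonneg (‖u j‖ ^ 2 - α j ^ 2)]
    linarith [mul_le_mul_of_nonneg_left amgm hlam.le]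
  · rintro _ ⟨u, α, rfl⟩
    choose v β hnet hreg using fun j =>
      exists_smul_eq_and_norm_pow_four_add_pow_four (g := reluLayer X)
        (fun _ hc => reluLayer_smul X hc) (u j) (α j)
    refine ⟨_, ⟨v, β, rfl⟩, le_of_eq ?_⟩
    have hfit : ∀ k, ∑ j, β j * max 0 (X.mulVec (v j) k) = ∑ j, α j * max 0 (X.mulVec (u j) k) :=
      fun k => Finset.sum_congr rfl fun j _ => congrFun (hnet j) k
    simp only [hfit, hreg, ← Finset.mul_sum]
    ring
end

section
/- Let X ∈ ℝ^{n×d} with n ≥ 2 and r = rank(X) ≥ 1. Then the set of activation patterns 𝒟_X = {diag(1(X u ≥ 0)) : u ∈ ℝ^d} is finite and satisfies |𝒟_X| ≤ 2 r (e (n − 1) / r)^r. -/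
/-!
The activation patterns `{j | 0 ≤ (X u)_j}` form a family of subsets of the rows whose
VC dimension is at most `r = rank X`: if more than `r` rows were shattered, they would satisfy a
linear relation `∑ c_j X_j = 0`, and evaluating it at a `u` whose pattern on these rows is
`{c_j > 0}` gives a sum of nonnegative terms `c_j (X u)_j` that is positive unless `c ≥ 0`;
applying this to `c` and `-c` forces `c = 0`. By Sauer–Shelah there are at most
`∑_{k ≤ r} (n choose k) ≤ (e n / r)^r` patterns, and `(n / (n - 1))^r ≤ 2 r` for `r ≤ n`.
-/

open Finset Matrix

theorem Finset.nonneg_of_sum_mul_eq_zero {ι R : Type*} [CommRing R] [LinearOrder R]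
    [IsStrictOrderedRing R] {T : Finset ι} {c y : ι → R}
    (h : ∑ j ∈ T, c j * y j = 0) (hsign : ∀ j ∈ T, 0 < c j ↔ 0 ≤ y j) : ∀ j ∈ T, 0 ≤ c j := by
  have hterm : ∀ j ∈ T, 0 ≤ c j * y j := fun j hj => by
    by_cases hc : 0 < c j
    · exact mul_nonneg hc.le ((hsign j hj).1 hc)
    · exact mul_nonneg_of_nonpos_of_nonpos (not_lt.1 hc) (not_le.1 (mt (hsign j hj).2 hc)).le
  intro j hj
  by_contra! hc
  have hy : y j < 0 := not_le.1 (mt (hsign j hj).2 hc.not_gt)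
  exact (mul_pos_of_neg_of_neg hc hy).ne' ((sum_eq_zero_iff_of_nonneg hterm).1 h j hj)

theorem Matrix.exists_rows_dependence_of_rank_lt {ι κ 𝕜 : Type*} [Fintype κ] [Field 𝕜]
    (X : Matrix ι κ 𝕜) {T : Finset ι} (hT : X.rank < #T) :
    ∃ c : ι → 𝕜, ∑ j ∈ T, c j • X j = 0 ∧ ∃ i ∈ T, c i ≠ 0 := by
  by_contra! h
  have hli : LinearIndepOn 𝕜 X.row (T : Set ι) := linearIndepOn_finset_iff.2 h
  have hsub := X.rank_submatrix_le (Subtype.val : ↥(T : Set ι) → ι) id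
  rw [hli.rank_matrix (M := X.submatrix (Subtype.val : ↥(T : Set ι) → ι) id)] at hsub
  simp at hsub
  omega

namespace Matrix

variable {ι κ 𝕜 : Type*} [Fintype ι] [Fintype κ] [Field 𝕜] [LinearOrder 𝕜]

open Classical in
noncomputable def activationPatterns (X : Matrix ι κ 𝕜) : Finset (Finset ι) :=
  {S | ∃ u : κ → 𝕜, {j | 0 ≤ (X *ᵥ u) j} = S}

theorem mem_activationPatterns {X : Matrix ι κ 𝕜} {S : Finset ι} :
    S ∈ X.activationPatterns ↔ ∃ u : κ → 𝕜, ∀ j, 0 ≤ (X *ᵥ u) j ↔ j ∈ S := by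
  simp [activationPatterns, Set.ext_iff]

variable [IsStrictOrderedRing 𝕜]

theorem card_le_rank_of_shatters [DecidableEq ι] {X : Matrix ι κ 𝕜} {T : Finset ι}
    (hT : X.activationPatterns.Shatters T) : #T ≤ X.rank := by
  by_contra! hlt
  obtain ⟨c, hc, i, hiT, hci⟩ := X.exists_rows_dependence_of_rank_lt hlt
  have hnonneg : ∀ c : ι → 𝕜, ∑ j ∈ T, c j • X j = 0 → ∀ j ∈ T, 0 ≤ c j := by
    intro c hc
    obtain ⟨S, hS, hTS⟩ := hT (filter_subset (0 < c ·) T)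
    obtain ⟨u, hu⟩ := mem_activationPatterns.1 hS
    refine nonneg_of_sum_mul_eq_zero (y := X *ᵥ u) ?_ fun j hj => ?_
    · simpa [sum_dotProduct, smul_dotProduct, mulVec] using congr_arg (· ⬝ᵥ u) hc
    · simpa [hu, hj] using (Finset.ext_iff.1 hTS j).symm
  have h1 := hnonneg c hc i hiT
  have h2 := hnonneg (-c) (by simpa [neg_smul] using hc) i hiT
  exact hci (le_antisymm (neg_nonneg.1 h2) h1)

theorem vcDim_activationPatterns_le [DecidableEq ι] (X : Matrix ι κ 𝕜) :
    X.activationPatterns.vcDim ≤ X.rank :=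
  Finset.sup_le fun _ hT => card_le_rank_of_shatters (mem_shatterer.1 hT)

theorem card_activationPatterns_le [DecidableEq ι] (X : Matrix ι κ 𝕜) :
    #X.activationPatterns ≤ ∑ k ∈ Iic X.rank, (Fintype.card ι).choose k :=
  calc #X.activationPatterns ≤ #X.activationPatterns.shatterer := card_le_card_shatterer _
    _ ≤ ∑ k ∈ Iic X.activationPatterns.vcDim, (Fintype.card ι).choose k :=
      card_shatterer_le_sum_vcDim
    _ ≤ ∑ k ∈ Iic X.rank, (Fintype.card ι).choose k :=
      sum_le_sum_of_subset (Iic_subset_Iic.2 X.vcDim_activationPatterns_le)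

end Matrix

theorem sum_choose_mul_pow_le_exp {n r : ℕ} (hrn : r ≤ n) {x : ℝ} (hx₀ : 0 ≤ x) (hx₁ : x ≤ 1) :
    (∑ k ∈ Iic r, (n.choose k : ℝ)) * x ^ r ≤ Real.exp (x * n) :=
  calc (∑ k ∈ Iic r, (n.choose k : ℝ)) * x ^ r
      ≤ ∑ k ∈ Iic r, (n.choose k : ℝ) * x ^ k := by
        rw [sum_mul]
        exact sum_le_sum fun k hk => mul_le_mul_of_nonneg_left
          (pow_le_pow_of_le_one hx₀ hx₁ (mem_Iic.1 hk)) (by positivity)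
    _ ≤ ∑ k ∈ range (n + 1), (n.choose k : ℝ) * x ^ k :=
        sum_le_sum_of_subset_of_nonneg (fun k hk => mem_range.2 (by grind))
          fun _ _ _ => by positivity
    _ = (x + 1) ^ n := by simp [add_pow, mul_comm]
    _ ≤ Real.exp x ^ n := by gcongr; exact Real.add_one_le_exp x
    _ = Real.exp (x * n) := by rw [← Real.exp_nat_mul, mul_comm]

theorem sum_choose_le_exp_mul_div_pow {n r : ℕ} (hr : 0 < r) (hrn : r ≤ n) :
    ∑ k ∈ Iic r, (n.choose k : ℝ) ≤ (Real.exp 1 * n / r) ^ r := by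
  have hn : (0 : ℝ) < n := by exact_mod_cast hr.trans_le hrn
  have hx : (0 : ℝ) < r / n := by positivity
  have := sum_choose_mul_pow_le_exp hrn hx.le
    ((div_le_one hn).2 (by exact_mod_cast hrn))
  rw [div_mul_cancel₀ _ hn.ne', ← le_div_iff₀ (by positivity)] at this
  refine this.trans_eq ?_
  rw [← Real.exp_one_pow, ← div_pow, div_div_eq_mul_div]

theorem div_sub_one_pow_le {x : ℝ} (hx : 2 ≤ x) {r : ℕ} (hr : 1 ≤ r) (hrx : r ≤ x) :
    (x / (x - 1)) ^ r ≤ 2 * r := by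
  induction r, hr using Nat.le_induction with
  | base => rw [pow_one, div_le_iff₀ (by linarith)]; push_cast; linarith
  | succ r hr ih =>
    push_cast at hrx ⊢
    have hx1 : 0 < x - 1 := by linarith
    calc (x / (x - 1)) ^ (r + 1) = (x / (x - 1)) ^ r * (x / (x - 1)) := pow_succ _ _
      _ ≤ 2 * r * (x / (x - 1)) := by gcongr; exact ih (by linarith)
      _ ≤ 2 * (r + 1) := by rw [mul_div_assoc', div_le_iff₀ hx1]; nlinarith

theorem sum_choose_le_two_mul_mul_pow {n r : ℕ} (hn : 2 ≤ n) (hr : 1 ≤ r) (hrn : r ≤ n) :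
    ∑ k ∈ Iic r, (n.choose k : ℝ) ≤ 2 * r * (Real.exp 1 * (n - 1) / r) ^ r := by
  have hn' : (2 : ℝ) ≤ n := by exact_mod_cast hn
  have hn1 : (0 : ℝ) < n - 1 := by linarith
  calc ∑ k ∈ Iic r, (n.choose k : ℝ) ≤ (Real.exp 1 * n / r) ^ r :=
        sum_choose_le_exp_mul_div_pow hr hrn
    _ = (n / (n - 1)) ^ r * (Real.exp 1 * (n - 1) / r) ^ r := by
        rw [← mul_pow]; field_simp
    _ ≤ 2 * r * (Real.exp 1 * (n - 1) / r) ^ r := by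
        gcongr
        exact div_sub_one_pow_le hn' hr (by exact_mod_cast hrn)

/-- The set of activation-pattern diagonal boolean matrices
`𝒟_X = {diag(1(Xu ≥ 0)) : u ∈ ℝ^d}` is finite, with cardinality at most
`2 r (e (n - 1) / r)^r` where `r = rank X ≥ 1` and `n ≥ 2`. -/
theorem stmt_6 (n d : ℕ) (hn : 2 ≤ n) (X : Matrix (Fin n) (Fin d) ℝ)
    (hr : 1 ≤ X.rank) :
    ({D : Matrix (Fin n) (Fin n) ℝ | ∃ u : Fin d → ℝ,
        D = Matrix.diagonal fun j => if 0 ≤ X.mulVec u j then (1 : ℝ) else 0}).Finite ∧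
    (({D : Matrix (Fin n) (Fin n) ℝ | ∃ u : Fin d → ℝ,
        D = Matrix.diagonal fun j => if 0 ≤ X.mulVec u j then (1 : ℝ) else 0}).ncard : ℝ) ≤
      2 * (X.rank : ℝ) * (Real.exp 1 * ((n : ℝ) - 1) / (X.rank : ℝ)) ^ (X.rank) := by
  classical
  set diagIndicator : Finset (Fin n) → Matrix (Fin n) (Fin n) ℝ :=
    fun S => Matrix.diagonal fun j => if j ∈ S then 1 else 0
  have hpatterns : {D : Matrix (Fin n) (Fin n) ℝ | ∃ u : Fin d → ℝ,
      D = Matrix.diagonal fun j => if 0 ≤ X.mulVec u j then (1 : ℝ) else 0} =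
      diagIndicator '' X.activationPatterns := by
    ext D
    simp only [Set.mem_ofPred_eq, Set.mem_image, mem_coe, Matrix.mem_activationPatterns]
    constructor
    · rintro ⟨u, rfl⟩
      exact ⟨({j | 0 ≤ (X *ᵥ u) j} : Finset (Fin n)), ⟨u, by simp⟩, by simp [diagIndicator]⟩
    · rintro ⟨S, ⟨u, hu⟩, rfl⟩
      exact ⟨u, by simp [diagIndicator, hu]⟩
  rw [hpatterns]
  refine ⟨X.activationPatterns.finite_toSet.image _, ?_⟩
  calc ((diagIndicator '' X.activationPatterns).ncard : ℝ)
      ≤ (∑ k ∈ Iic X.rank, n.choose k : ℕ) := by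
        refine Nat.cast_le.2 ((Set.ncard_image_le (finite_toSet _)).trans ?_)
        simpa using X.card_activationPatterns_le
    _ ≤ _ := by
        push_cast
        exact sum_choose_le_two_mul_mul_pow hn hr X.rank_le_height
end

section
/- Let μ > 0 and ε ≥ 0. Let p(t) = (1/√(2π)) exp(−(t − μ)^2/2) and q(t) = (1/√(2π)) exp(−t^2/2) be the densities of the Gaussian distributions N(μ, 1) and N(0, 1), and let Φ be the standard normal cumulative distribution function. Then the hockey-stick divergence of order e^ε from N(μ,1) to N(0,1) satisfies ∫_ℝ [p(t) − e^ε q(t)]_+ dt = Φ(−ε/μ + μ/2) − e^ε Φ(−ε/μ − μ/2). -/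
/-!
The likelihood ratio of `N(μ, 1)` to `N(0, 1)` is `exp (μ t - μ² / 2)`, increasing in `t`, so the
integrand `[p - e^ε q]_+` vanishes exactly left of the threshold `c = ε / μ + μ / 2`. The divergence
is therefore the difference of the two Gaussian tail masses beyond `c`, and by the reflection
`t ↦ m - t` the tail of `N(m, 1)` beyond `c` is `Φ(m - c)`.
-/

open MeasureTheory

/-- The standard normal cumulative distribution function. -/
noncomputable def stdNormalCDF (x : ℝ) : ℝ :=
  ∫ s in Set.Iic x, (1 / Real.sqrt (2 * Real.pi)) * Real.exp (-s ^ 2 / 2)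

open Set

noncomputable def gaussDensity (m t : ℝ) : ℝ :=
  (1 / Real.sqrt (2 * Real.pi)) * Real.exp (-(t - m) ^ 2 / 2)

lemma gaussDensity_pos (m t : ℝ) : 0 < gaussDensity m t := by
  unfold gaussDensity
  positivity

lemma integrable_gaussDensity (m : ℝ) : Integrable (gaussDensity m) := by
  have h := ((integrable_exp_neg_mul_sq (b := 1 / 2) (by norm_num)).comp_sub_right m).const_mul
    (1 / Real.sqrt (2 * Real.pi))
  refine h.congr (ae_of_all _ fun t => ?_)
  simp only [gaussDensity]
  ring_nf

lemma setIntegral_Ici_gaussDensity (m a : ℝ) :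
    ∫ t in Ici a, gaussDensity m t = stdNormalCDF (m - a) := by
  have hpre : (fun t : ℝ => m - t) ⁻¹' Iic (m - a) = Ici a := by
    ext t
    simp
  have h := (Measure.measurePreserving_sub_left volume m).setIntegral_preimage_emb
    (MeasurableEquiv.subLeft m).measurableEmbedding
    (fun s => (1 / Real.sqrt (2 * Real.pi)) * Real.exp (-s ^ 2 / 2)) (Iic (m - a))
  rw [hpre] at h
  rw [stdNormalCDF, ← h]
  refine setIntegral_congr_fun measurableSet_Ici fun t _ => ?_
  simp only [gaussDensity]
  ring_nf

lemma gaussDensity_eq_exp_mul (m t : ℝ) :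
    gaussDensity m t = Real.exp (m * t - m ^ 2 / 2) * gaussDensity 0 t := by
  simp only [gaussDensity, sub_zero]
  rw [mul_left_comm, ← Real.exp_add]
  ring_nf

lemma gaussDensity_sub_mul_nonneg_iff {m : ℝ} (hm : 0 < m) (ε t : ℝ) :
    0 ≤ gaussDensity m t - Real.exp ε * gaussDensity 0 t ↔ ε / m + m / 2 ≤ t := by
  rw [gaussDensity_eq_exp_mul, ← sub_mul, mul_nonneg_iff_of_pos_right (gaussDensity_pos 0 t),
    sub_nonneg, Real.exp_le_exp, div_add_div _ _ hm.ne' two_ne_zero, div_le_iff₀ (by positivity)]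
  constructor <;> intro h <;> nlinarith

lemma integral_max_zero_eq_setIntegral_Ici {ν : Measure ℝ} {f : ℝ → ℝ} {c : ℝ}
    (hf : ∀ t, 0 ≤ f t ↔ c ≤ t) : ∫ t, max 0 (f t) ∂ν = ∫ t in Ici c, f t ∂ν := by
  rw [← integral_indicator measurableSet_Ici]
  congr 1 with t
  by_cases ht : c ≤ t
  · rw [indicator_of_mem (mem_Ici.2 ht), max_eq_right ((hf t).2 ht)]
  · rw [indicator_of_notMem (fun h => ht (mem_Ici.1 h)),
      max_eq_left (not_le.1 (mt (hf t).1 ht)).le]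

theorem stmt_8_general (μ ε : ℝ) (hμ : 0 < μ) :
    (∫ t : ℝ, max 0 ((1 / Real.sqrt (2 * Real.pi)) * Real.exp (-(t - μ) ^ 2 / 2) -
        Real.exp ε * ((1 / Real.sqrt (2 * Real.pi)) * Real.exp (-t ^ 2 / 2)))) =
      stdNormalCDF (-ε / μ + μ / 2) - Real.exp ε * stdNormalCDF (-ε / μ - μ / 2) := by
  trans ∫ t, max 0 (gaussDensity μ t - Real.exp ε * gaussDensity 0 t)
  · simp [gaussDensity]
  rw [integral_max_zero_eq_setIntegral_Ici (gaussDensity_sub_mul_nonneg_iff hμ ε),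
    integral_sub (integrable_gaussDensity μ).integrableOn
      ((integrable_gaussDensity 0).integrableOn.const_mul _),
    integral_const_mul, setIntegral_Ici_gaussDensity, setIntegral_Ici_gaussDensity]
  ring_nf

/-- The hockey-stick divergence of order `e^ε` from `N(μ, 1)` to `N(0, 1)` equals
`Φ(-ε/μ + μ/2) - e^ε Φ(-ε/μ - μ/2)`. -/
theorem stmt_8 (μ ε : ℝ) (hμ : 0 < μ) (hε : 0 ≤ ε) :
    (∫ t : ℝ, max 0 ((1 / Real.sqrt (2 * Real.pi)) * Real.exp (-(t - μ) ^ 2 / 2) -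
        Real.exp ε * ((1 / Real.sqrt (2 * Real.pi)) * Real.exp (-t ^ 2 / 2)))) =
      stdNormalCDF (-ε / μ + μ / 2) - Real.exp ε * stdNormalCDF (-ε / μ - μ / 2) :=
  stmt_8_general μ ε hμ
end

section
/- Let P and Q be probability measures on a measurable space (Ω, 𝒜), both absolutely continuous with respect to a σ-finite measure ν, with densities p and q. Let α > 1 and ε' ∈ ℝ satisfy ∫ p(t)^α q(t)^{1−α} dν(t) ≤ exp((α − 1) ε') (i.e. the Rényi divergence of order α from P to Q is at most ε'). Then for every ε ≥ 0, the hockey-stick divergence satisfies ∫ [p(t) − e^ε q(t)]_+ dν(t) ≤ (exp((α − 1)(ε' − ε)) / α) · (1 − 1/α)^{α − 1}. -/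
/-!
Bernoulli's inequality `1 + α s ≤ (1 + s) ^ α` is the tangent line of `r ↦ r ^ α` at
`r₀ = β / (1 - 1/α)`; rescaled so that its slope is `1`, it gives
`r - β ≤ c r ^ α` with `c = (1 - 1/α) ^ (α - 1) / (α β ^ (α - 1))`. Homogenising with `r = p / q`
yields the pointwise bound `[p - β q]₊ ≤ c p ^ α q ^ (1 - α)`, and integrating it against `ν`
with `β = e ^ ε` turns the Rényi bound into the hockey-stick bound.
-/

open MeasureTheory

lemma sub_le_const_mul_rpow {α β r : ℝ} (hα : 1 < α) (hβ : 0 < β) (hr : 0 ≤ r) :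
    r - β ≤ (1 - 1 / α) ^ (α - 1) / (α * β ^ (α - 1)) * r ^ α := by
  have hα0 : 0 < α := by linarith
  set a := 1 - 1 / α with ha_def
  have ha : 0 < a := by rw [ha_def, sub_pos, div_lt_one hα0]; exact hα
  have hαa : α * a = α - 1 := by rw [ha_def]; field_simp
  have hbern := one_add_mul_self_le_rpow_one_add (s := a * r / β - 1) (by
    have : 0 ≤ a * r / β := by positivity
    linarith) hα.le
  rw [add_sub_cancel] at hbern
  calc r - β = β / (α * a) * (1 + α * (a * r / β - 1)) := by
        field_simp; linear_combination (-β) * hαa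
    _ ≤ β / (α * a) * (a * r / β) ^ α := by gcongr
    _ = a ^ (α - 1) / (α * β ^ (α - 1)) * r ^ α := by
        rw [Real.div_rpow (by positivity) hβ.le, Real.mul_rpow ha.le hr,
          Real.rpow_sub_one ha.ne', Real.rpow_sub_one hβ.ne']
        field_simp

lemma sub_mul_le_rpow_mul_rpow {α β x y : ℝ} (hα : 1 < α) (hβ : 0 < β) (hx : 0 ≤ x)
    (hy : 0 < y) :
    x - β * y ≤ (1 - 1 / α) ^ (α - 1) / (α * β ^ (α - 1)) * (x ^ α * y ^ (1 - α)) := by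
  have hr := sub_le_const_mul_rpow hα hβ (div_nonneg hx hy.le)
  calc x - β * y = (x / y - β) * y := by field_simp
    _ ≤ (1 - 1 / α) ^ (α - 1) / (α * β ^ (α - 1)) * (x / y) ^ α * y := by gcongr
    _ = _ := by
      rw [Real.div_rpow hx hy.le, Real.rpow_sub hy, Real.rpow_one]
      field_simp

lemma ofReal_max_zero_sub_mul_le {α β x y : ℝ} (hα : 1 < α) (hβ : 0 < β) (hx : 0 ≤ x)
    (hy : 0 ≤ y) :
    ENNReal.ofReal (max 0 (x - β * y)) ≤
      ENNReal.ofReal ((1 - 1 / α) ^ (α - 1) / (α * β ^ (α - 1))) *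
        (ENNReal.ofReal x ^ α * ENNReal.ofReal y ^ (1 - α)) := by
  have hc : 0 < (1 - 1 / α) ^ (α - 1) / (α * β ^ (α - 1)) := by
    have : 0 < 1 - 1 / α := by rw [sub_pos, div_lt_one (by linarith)]; exact hα
    positivity
  rcases hy.lt_or_eq with hy | rfl
  · rw [ENNReal.ofReal_rpow_of_nonneg hx (by linarith), ENNReal.ofReal_rpow_of_pos hy,
      ← ENNReal.ofReal_mul (by positivity), ← ENNReal.ofReal_mul hc.le]
    exact ENNReal.ofReal_le_ofReal
      (max_le (by positivity) (sub_mul_le_rpow_mul_rpow hα hβ hx hy))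
  -- for `y = 0 < x` the right side is `⊤`, as `0 ^ (1 - α) = ⊤` in `ℝ≥0∞`
  rcases hx.lt_or_eq with hx | rfl
  · rw [ENNReal.ofReal_zero, ENNReal.zero_rpow_of_neg (by linarith),
      ENNReal.mul_top (ENNReal.rpow_pos (ENNReal.ofReal_pos.2 hx) ENNReal.ofReal_ne_top).ne',
      ENNReal.mul_top (ENNReal.ofReal_pos.2 hc).ne']
    exact le_top
  · simp

lemma integral_le_of_lintegral_enorm_le {Ω : Type*} [MeasurableSpace Ω] {ν : Measure Ω}
    {f : Ω → ℝ} {B : ℝ} (hB : 0 ≤ B) (h : ∫⁻ t, ‖f t‖ₑ ∂ν ≤ ENNReal.ofReal B) :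
    ∫ t, f t ∂ν ≤ B :=
  (ENNReal.ofReal_le_ofReal_iff hB).mp <|
    (Real.ofReal_le_enorm _).trans <| (enorm_integral_le_lintegral_enorm f).trans h

theorem stmt_10_general {Ω : Type*} [MeasurableSpace Ω] (ν : Measure Ω)
    (p q : Ω → ℝ)
    (hp0 : ∀ t, 0 ≤ p t) (hq0 : ∀ t, 0 ≤ q t)
    (α ε' : ℝ) (hα : 1 < α)
    (hren : ∫⁻ t, ENNReal.ofReal (p t) ^ α * ENNReal.ofReal (q t) ^ (1 - α) ∂ν ≤
      ENNReal.ofReal (Real.exp ((α - 1) * ε')))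
    (ε : ℝ) :
    ∫ t, max 0 (p t - Real.exp ε * q t) ∂ν ≤
      Real.exp ((α - 1) * (ε' - ε)) / α * (1 - 1 / α) ^ (α - 1) := by
  set c := (1 - 1 / α) ^ (α - 1) / (α * Real.exp ε ^ (α - 1)) with hc_def
  have hc : 0 ≤ c := div_nonneg
    (Real.rpow_nonneg (by rw [sub_nonneg, div_le_one (by linarith)]; exact hα.le) _)
    (by positivity)
  have hconst : c * Real.exp ((α - 1) * ε') =
      Real.exp ((α - 1) * (ε' - ε)) / α * (1 - 1 / α) ^ (α - 1) := by
    rw [hc_def, ← Real.exp_mul, show (α - 1) * (ε' - ε) = (α - 1) * ε' - ε * (α - 1) by ring,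
      Real.exp_sub]
    ring
  rw [← hconst]
  apply integral_le_of_lintegral_enorm_le (by positivity)
  calc ∫⁻ t, ‖max 0 (p t - Real.exp ε * q t)‖ₑ ∂ν
      ≤ ∫⁻ t, ENNReal.ofReal c *
          (ENNReal.ofReal (p t) ^ α * ENNReal.ofReal (q t) ^ (1 - α)) ∂ν := by
        refine lintegral_mono fun t ↦ ?_
        rw [Real.enorm_of_nonneg (le_max_left _ _)]
        exact ofReal_max_zero_sub_mul_le hα (Real.exp_pos ε) (hp0 t) (hq0 t)
    _ = ENNReal.ofReal c *
          ∫⁻ t, ENNReal.ofReal (p t) ^ α * ENNReal.ofReal (q t) ^ (1 - α) ∂ν :=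
        lintegral_const_mul' _ _ ENNReal.ofReal_ne_top
    _ ≤ ENNReal.ofReal c * ENNReal.ofReal (Real.exp ((α - 1) * ε')) := by gcongr
    _ = ENNReal.ofReal (c * Real.exp ((α - 1) * ε')) := (ENNReal.ofReal_mul hc).symm

/-- Conversion of a Rényi divergence bound of order `α > 1` into a hockey-stick
(i.e. `(ε, δ)`-DP) bound: if `∫ p^α q^(1-α) dν ≤ exp((α-1)ε')` then for every `ε ≥ 0`,
`∫ [p - e^ε q]₊ dν ≤ exp((α-1)(ε'-ε))/α * (1 - 1/α)^(α-1)`. -/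
theorem stmt_10 {Ω : Type*} [MeasurableSpace Ω] (ν : Measure Ω) [SigmaFinite ν]
    (p q : Ω → ℝ) (hp : Measurable p) (hq : Measurable q)
    (hp0 : ∀ t, 0 ≤ p t) (hq0 : ∀ t, 0 ≤ q t)
    (hpi : Integrable p ν) (hqi : Integrable q ν)
    (hp1 : ∫ t, p t ∂ν = 1) (hq1 : ∫ t, q t ∂ν = 1)
    (α ε' : ℝ) (hα : 1 < α)
    (hren : ∫⁻ t, ENNReal.ofReal (p t) ^ α * ENNReal.ofReal (q t) ^ (1 - α) ∂ν ≤
      ENNReal.ofReal (Real.exp ((α - 1) * ε')))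
    (ε : ℝ) (hε : 0 ≤ ε) :
    ∫ t, max 0 (p t - Real.exp ε * q t) ∂ν ≤
      Real.exp ((α - 1) * (ε' - ε)) / α * (1 - 1 / α) ^ (α - 1) :=
  stmt_10_general ν p q hp0 hq0 α ε' hα hren ε
end

section
/- Let P and Q be probability measures on a measurable space (Ω, 𝒜), both absolutely continuous with respect to a σ-finite measure ν, with densities p and q, and let ε ∈ ℝ. Then inf{δ ≥ 0 : P(E) ≤ e^ε Q(E) + δ for all measurable E ⊆ Ω} = ∫ [p(t) − e^ε q(t)]_+ dν(t); equivalently, for every δ ≥ 0, one has P(E) ≤ e^ε Q(E) + δ for all measurable E if and only if ∫ [p(t) − e^ε q(t)]_+ dν(t) ≤ δ. -/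
open MeasureTheory

/-- The tight `δ` for a given `ε` equals the hockey-stick divergence of order `e^ε`:
for probability densities `p, q` w.r.t. a σ-finite measure `ν`,
`inf {δ ≥ 0 : ∀ E, P(E) ≤ e^ε Q(E) + δ} = ∫ [p - e^ε q]₊ dν`, and for every `δ ≥ 0`
the `(ε, δ)` inequality holds for all events iff `∫ [p - e^ε q]₊ dν ≤ δ`. -/
theorem stmt_11 {Ω : Type*} [MeasurableSpace Ω] (ν : Measure Ω) [SigmaFinite ν]
    (p q : Ω → ℝ) (hp : Measurable p) (hq : Measurable q)
    (hp0 : ∀ t, 0 ≤ p t) (hq0 : ∀ t, 0 ≤ q t)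
    (hpi : Integrable p ν) (hqi : Integrable q ν)
    (hp1 : ∫ t, p t ∂ν = 1) (hq1 : ∫ t, q t ∂ν = 1)
    (ε : ℝ) :
    sInf {δ : ℝ | 0 ≤ δ ∧ ∀ E : Set Ω, MeasurableSet E →
        ∫ t in E, p t ∂ν ≤ Real.exp ε * ∫ t in E, q t ∂ν + δ} =
      ∫ t, max 0 (p t - Real.exp ε * q t) ∂ν ∧
    ∀ δ : ℝ, 0 ≤ δ →
      ((∀ E : Set Ω, MeasurableSet E →
          ∫ t in E, p t ∂ν ≤ Real.exp ε * ∫ t in E, q t ∂ν + δ) ↔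
        ∫ t, max 0 (p t - Real.exp ε * q t) ∂ν ≤ δ) := by

  have hf : Integrable (fun t => p t - Real.exp ε * q t) ν :=
    hpi.sub (hqi.const_mul _)
  have hg : Integrable (fun t => max 0 (p t - Real.exp ε * q t)) ν := by
    simpa [max_comm] using hf.pos_part
  set S : Set Ω := {t | Real.exp ε * q t < p t} with hSdef
  have hSm : MeasurableSet S := measurableSet_lt (hq.const_mul _) hp
  have hind : (fun t => max 0 (p t - Real.exp ε * q t)) =
      S.indicator (fun t => p t - Real.exp ε * q t) := by
    funext t
    by_cases h : t ∈ S
    · have : Real.exp ε * q t < p t := h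
      rw [Set.indicator_of_mem h, max_eq_right (by linarith)]
    · have : ¬ (Real.exp ε * q t < p t) := h
      rw [Set.indicator_of_notMem h, max_eq_left (by push_neg at this; linarith)]
  have hsplit : ∀ E : Set Ω, MeasurableSet E →
      ∫ t in E, (p t - Real.exp ε * q t) ∂ν =
        ∫ t in E, p t ∂ν - Real.exp ε * ∫ t in E, q t ∂ν := by
    intro E hE
    rw [integral_sub hpi.restrict ((hqi.const_mul _).restrict), integral_const_mul]
  have hHS : ∫ t, max 0 (p t - Real.exp ε * q t) ∂ν =
      ∫ t in S, (p t - Real.exp ε * q t) ∂ν := by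
    rw [hind, integral_indicator hSm]
  have hH0 : 0 ≤ ∫ t, max 0 (p t - Real.exp ε * q t) ∂ν :=
    integral_nonneg fun t => le_max_left _ _
  have key : ∀ δ : ℝ,
      ((∀ E : Set Ω, MeasurableSet E →
          ∫ t in E, p t ∂ν ≤ Real.exp ε * ∫ t in E, q t ∂ν + δ) ↔
        ∫ t, max 0 (p t - Real.exp ε * q t) ∂ν ≤ δ) := by
    intro δ
    constructor
    · intro h
      have := h S hSm
      rw [hHS, hsplit S hSm]
      linarith
    · intro h E hE
      have h1 : ∫ t in E, (p t - Real.exp ε * q t) ∂ν ≤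
          ∫ t in E, max 0 (p t - Real.exp ε * q t) ∂ν :=
        setIntegral_mono hf.integrableOn hg.integrableOn
          fun t => le_max_right _ _
      have h2 : ∫ t in E, max 0 (p t - Real.exp ε * q t) ∂ν ≤
          ∫ t, max 0 (p t - Real.exp ε * q t) ∂ν :=
        setIntegral_le_integral hg (Filter.Eventually.of_forall fun t => le_max_left _ _)
      have h3 := hsplit E hE
      linarith
  constructor
  · have hset : {δ : ℝ | 0 ≤ δ ∧ ∀ E : Set Ω, MeasurableSet E →
        ∫ t in E, p t ∂ν ≤ Real.exp ε * ∫ t in E, q t ∂ν + δ} =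
        Set.Ici (∫ t, max 0 (p t - Real.exp ε * q t) ∂ν) := by
      ext δ
      simp only [Set.mem_setOf_eq, Set.mem_Ici]
      constructor
      · rintro ⟨-, h⟩; exact (key δ).1 h
      · intro h; exact ⟨le_trans hH0 h, (key δ).2 h⟩
    rw [hset, csInf_Ici]
  · intro δ _; exact key δ
end

section
/- Let Z be a set of data records, let m, n ∈ ℕ with m ≤ n and q = m/n, and let ℳ be a mechanism assigning to each dataset of m records a probability measure on a measurable space (Ω, 𝒜). Let P and Q be probability measures on a common measurable space such that for every pair of datasets D, D' of size m differing in exactly one entry and every α > 0, H_α(ℳ(D) ‖ ℳ(D')) ≤ H_α(P ‖ Q). Define the subsampled mechanism 𝑀̃ on datasets X of size n by 𝑀̃(X) = (1 / C(n, m)) Σ_S ℳ(X_S), the uniform mixture of ℳ applied to all size-m subsets X_S of X. Then for every pair of datasets X, Y of size n differing in exactly one entry: H_α(𝑀̃(X) ‖ 𝑀̃(Y)) ≤ H_α(q P + (1 − q) Q ‖ Q) for all α ≥ 1, and H_α(𝑀̃(X) ‖ 𝑀̃(Y)) ≤ H_α(P ‖ q Q + (1 − q) P) for all 0 ≤ α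 < 1. -/
/-!
Write `X = z ::ₘ C` and `Y = z' ::ₘ C`. Splitting the `m`-subsets of `X` according to whether they
contain `z`, and counting each `m`-subset of `C` once for each of its elements, gives
`m • ∑_{T ⊆ X} M T = ∑_S (m • M (z ::ₘ S) + ∑_{c ∈ C - S} M (c ::ₘ S))` over the `(m-1)`-subsets
`S` of `C`, and the same for `Y` with `z'` in place of `z`. By joint convexity of `H_α` it
suffices to compare the two summands belonging to one `S`. With `h = H_β(P ‖ Q)`, for `α ≥ 1` we
average the event-wise bounds `M (z ::ₘ S) E ≤ h + β M (w ::ₘ S) E` over `w ∈ z' ::ₘ (C - S)`,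
and for `α < 1` the bounds `M (w ::ₘ S) E ≤ h + β M (z' ::ₘ S) E` over `w ∈ z ::ₘ (C - S)`, with
`β` chosen to balance the weights. For exactly this `β`, `H_α(qP + (1-q)Q ‖ Q) = q H_β(P ‖ Q)`
and `H_α(P ‖ qQ + (1-q)P) = (1 - α(1-q)) H_β(P ‖ Q)`.
-/

open MeasureTheory
open scoped ENNReal

/-- The hockey-stick divergence of order `α ≥ 0` between two measures, as the supremum
over measurable events `E` of `μ(E) - α ν(E)` (truncated at `0`). -/
noncomputable def hsDiv {Ω : Type*} [MeasurableSpace Ω] (α : ℝ) (μ ν : Measure Ω) :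
    ENNReal :=
  ⨆ (E : Set Ω) (_ : MeasurableSet E), μ E - ENNReal.ofReal α * ν E

namespace MeasureTheory.Measure

variable {Ω : Type*} [MeasurableSpace Ω]

theorem multisetSum_apply {ι : Type*} (s : Multiset ι) (μ : ι → Measure Ω) (E : Set Ω) :
    (s.map μ).sum E = (s.map fun i => μ i E).sum := by
  induction s using Multiset.induction_on with
  | empty => simp
  | cons i s ih => simp [ih]

theorem nsmul_add_multisetSum_apply (m : ℕ) (μ : Measure Ω) (νs : Multiset (Measure Ω))
    (E : Set Ω) : (m • μ + νs.sum) E = m * μ E + (νs.map fun ν => ν E).sum := by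
  rw [add_apply, ← multisetSum_apply, Multiset.map_id']
  simp

end MeasureTheory.Measure

namespace Multiset

variable {β A : Type*} [DecidableEq β] [AddCommMonoid A]

theorem sum_powersetCard_sum_sub_cons (f : Multiset β → A) (C : Multiset β) (k : ℕ) :
    ((C.powersetCard k).map fun S => ((C - S).map fun c => f (c ::ₘ S)).sum).sum
      = (k + 1) • ((C.powersetCard (k + 1)).map f).sum := by
  induction C using Multiset.induction_on generalizing k f with
  | empty => cases k <;> simp [powersetCard_zero_left, powersetCard_zero_right]
  | cons a C ih =>
    cases k with
    | zero => simp [powersetCard_one, add_comm]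
    | succ k =>
      have hnew : ∀ S ∈ C.powersetCard (k + 1),
          ((a ::ₘ C - S).map fun c => f (c ::ₘ S)).sum
            = f (a ::ₘ S) + ((C - S).map fun c => f (c ::ₘ S)).sum := fun S hS => by
        rw [cons_sub_of_le _ (mem_powersetCard.1 hS).1, map_cons, sum_cons]
      have hold : ∀ S ∈ C.powersetCard k,
          ((a ::ₘ C - a ::ₘ S).map fun c => f (c ::ₘ a ::ₘ S)).sum
            = ((C - S).map fun c => f (a ::ₘ c ::ₘ S)).sum := fun S _ => by
        rw [sub_cons, erase_cons_head]
        simp only [cons_swap]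
      rw [powersetCard_cons, map_add, sum_add, map_congr rfl hnew, sum_map_add,
        ih f (k + 1), map_map, Function.comp_def, map_congr rfl hold,
        ih (fun S => f (a ::ₘ S)) k, powersetCard_cons, map_add, sum_add, map_map,
        Function.comp_def, smul_add, add_right_comm, ← succ_nsmul', add_comm]

theorem succ_nsmul_sum_powersetCard_cons (f : Multiset β → A) (C : Multiset β) (z : β)
    (k : ℕ) :
    (k + 1) • (((z ::ₘ C).powersetCard (k + 1)).map f).sum
      = ((C.powersetCard k).map fun S =>
          (k + 1) • f (z ::ₘ S) + ((C - S).map fun c => f (c ::ₘ S)).sum).sum := by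
  rw [powersetCard_cons, map_add, sum_add, smul_add, ← sum_powersetCard_sum_sub_cons,
    map_map, Function.comp_def, ← sum_map_nsmul, ← sum_map_add, add_comm]
  simp only [add_comm]

end Multiset

section HockeyStick

open Multiset

variable {Ω : Type*} [MeasurableSpace Ω]

theorem hsDiv_le_iff {α : ℝ} {μ ν : Measure Ω} {c : ℝ≥0∞} :
    hsDiv α μ ν ≤ c ↔ ∀ E, MeasurableSet E → μ E ≤ c + ENNReal.ofReal α * ν E := by
  simp only [hsDiv, iSup₂_le_iff, tsub_le_iff_right]

theorem le_hsDiv_add (α : ℝ) (μ ν : Measure Ω) {E : Set Ω} (hE : MeasurableSet E) :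
    μ E ≤ hsDiv α μ ν + ENNReal.ofReal α * ν E :=
  hsDiv_le_iff.1 le_rfl E hE

theorem hsDiv_congr {α α' : ℝ} {μ ν μ' ν' : Measure Ω}
    (h : ∀ E, MeasurableSet E →
      μ E - ENNReal.ofReal α * ν E = μ' E - ENNReal.ofReal α' * ν' E) :
    hsDiv α μ ν = hsDiv α' μ' ν' :=
  iSup_congr fun E => iSup_congr (h E)

theorem hsDiv_zero (μ ν : Measure Ω) : hsDiv 0 μ ν = μ Set.univ := by
  refine le_antisymm (hsDiv_le_iff.2 fun E _ => ?_) ?_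
  · simpa using measure_mono (Set.subset_univ E)
  · simpa using le_hsDiv_add 0 μ ν MeasurableSet.univ

theorem hsDiv_self_le (β : ℝ) (μ : Measure Ω) {Ω' : Type*} [MeasurableSpace Ω']
    (P Q : Measure Ω') [IsProbabilityMeasure μ] [IsProbabilityMeasure P]
    [IsProbabilityMeasure Q] : hsDiv β μ μ ≤ hsDiv β P Q := by
  have hP : 1 - ENNReal.ofReal β ≤ hsDiv β P Q := by
    simpa using le_hsDiv_add β P Q MeasurableSet.univ
  refine hsDiv_le_iff.2 fun E _ => ?_
  rcases le_total 1 (ENNReal.ofReal β) with hβ | hβ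
  · exact (le_mul_of_one_le_left zero_le hβ).trans le_add_self
  · calc μ E = (1 - ENNReal.ofReal β) * μ E + ENNReal.ofReal β * μ E := by
          rw [← add_mul, tsub_add_cancel_of_le hβ, one_mul]
      _ ≤ (1 - ENNReal.ofReal β) * 1 + ENNReal.ofReal β * μ E := by gcongr; exact prob_le_one
      _ ≤ hsDiv β P Q + ENNReal.ofReal β * μ E := by rw [mul_one]; gcongr

theorem hsDiv_smul_le (α : ℝ) (c : ℝ≥0∞) (μ ν : Measure Ω) :
    hsDiv α (c • μ) (c • ν) ≤ c * hsDiv α μ ν := by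
  refine hsDiv_le_iff.2 fun E hE => ?_
  calc c * μ E ≤ c * (hsDiv α μ ν + ENNReal.ofReal α * ν E) := by
        gcongr; exact le_hsDiv_add α μ ν hE
    _ = c * hsDiv α μ ν + ENNReal.ofReal α * (c * ν E) := by ring

theorem hsDiv_multisetSum_le {ι : Type*} (α : ℝ) (s : Multiset ι) (μ ν : ι → Measure Ω) :
    hsDiv α (s.map μ).sum (s.map ν).sum ≤ (s.map fun i => hsDiv α (μ i) (ν i)).sum := by
  refine hsDiv_le_iff.2 fun E hE => ?_
  rw [Measure.multisetSum_apply, Measure.multisetSum_apply, ← Multiset.sum_map_mul_left,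
    ← Multiset.sum_map_add]
  exact Multiset.sum_map_le_sum_map _ _ fun i _ => le_hsDiv_add α (μ i) (ν i) hE

theorem hsDiv_smul_right {β : ℝ} (hβ : 0 ≤ β) (c : ℝ) (μ ν : Measure Ω) :
    hsDiv β μ (ENNReal.ofReal c • ν) = hsDiv (β * c) μ ν :=
  hsDiv_congr fun E _ => by rw [Measure.smul_apply, smul_eq_mul, ← mul_assoc,
    ← ENNReal.ofReal_mul hβ]

theorem hsDiv_smul_left (β : ℝ) {c : ℝ} (hc : 0 < c) (μ ν : Measure Ω) :
    hsDiv β (ENNReal.ofReal c • μ) ν = ENNReal.ofReal c * hsDiv (β / c) μ ν := by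
  rw [hsDiv, hsDiv, ENNReal.mul_iSup]
  refine iSup_congr fun E => ?_
  rw [ENNReal.mul_iSup]
  refine iSup_congr fun _ => ?_
  rw [ENNReal.mul_sub (fun _ _ => ENNReal.ofReal_ne_top), ← mul_assoc,
    ← ENNReal.ofReal_mul hc.le, mul_div_cancel₀ β hc.ne', Measure.smul_apply, smul_eq_mul]

theorem hsDiv_add_smul_right_self {α c : ℝ} (hc : 0 ≤ c) (hcα : c ≤ α) (μ ν : Measure Ω)
    [IsFiniteMeasure ν] : hsDiv α (μ + ENNReal.ofReal c • ν) ν = hsDiv (α - c) μ ν :=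
  hsDiv_congr fun E _ => by
    have hsplit : ENNReal.ofReal α * ν E
        = ENNReal.ofReal (α - c) * ν E + ENNReal.ofReal c * ν E := by
      rw [← add_mul, ← ENNReal.ofReal_add (sub_nonneg.2 hcα) hc, sub_add_cancel]
    rw [Measure.add_apply, Measure.smul_apply, smul_eq_mul, hsplit,
      ENNReal.add_sub_add_eq_sub_right]

theorem hsDiv_add_smul_left_self {α c : ℝ} (hα : 0 ≤ α) (hc : 0 ≤ c) (hαc : α * c ≤ 1)
    (μ ν : Measure Ω) [IsFiniteMeasure μ] :
    hsDiv α μ (ν + ENNReal.ofReal c • μ) = hsDiv α (ENNReal.ofReal (1 - α * c) • μ) ν :=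
  hsDiv_congr fun E _ => by
    have hsplit : μ E = ENNReal.ofReal (1 - α * c) * μ E + ENNReal.ofReal (α * c) * μ E := by
      rw [← add_mul, ← ENNReal.ofReal_add (sub_nonneg.2 hαc) (by positivity), sub_add_cancel,
        ENNReal.ofReal_one, one_mul]
    rw [Measure.add_apply, Measure.smul_apply, Measure.smul_apply, smul_eq_mul, smul_eq_mul,
      mul_add, ← mul_assoc, ← ENNReal.ofReal_mul hα, add_comm]
    nth_rw 1 [hsplit]
    rw [add_comm (ENNReal.ofReal (α * c) * μ E), ENNReal.add_sub_add_eq_sub_right]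

theorem hsDiv_mix_left {q α : ℝ} (hq0 : 0 < q) (hq1 : q ≤ 1) (hα : 1 - q ≤ α)
    (P Q : Measure Ω) [IsFiniteMeasure Q] :
    hsDiv α (ENNReal.ofReal q • P + ENNReal.ofReal (1 - q) • Q) Q
      = ENNReal.ofReal q * hsDiv ((α - (1 - q)) / q) P Q := by
  rw [hsDiv_add_smul_right_self (sub_nonneg.2 hq1) hα, hsDiv_smul_left _ hq0]

theorem hsDiv_mix_right {q α : ℝ} (hq0 : 0 ≤ q) (hq1 : q ≤ 1) (hα0 : 0 ≤ α) (hα1 : α < 1)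
    (P Q : Measure Ω) [IsFiniteMeasure P] :
    hsDiv α P (ENNReal.ofReal q • Q + ENNReal.ofReal (1 - q) • P)
      = ENNReal.ofReal (1 - α * (1 - q)) * hsDiv (α * q / (1 - α * (1 - q))) P Q := by
  rw [hsDiv_add_smul_left_self hα0 (sub_nonneg.2 hq1) (by nlinarith), hsDiv_smul_right hα0,
    hsDiv_smul_left _ (by nlinarith)]

theorem hsDiv_nsmul_add_sum_le_of_one_le {m : ℕ} {α β : ℝ} {h : ℝ≥0∞} {μ μ' : Measure Ω}
    {νs : Multiset (Measure Ω)} (hα : 1 ≤ α) (hβ : 0 < β)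
    (hβm : m * β = m * α + (α - 1) * card νs) (hμμ' : hsDiv β μ μ' ≤ h)
    (hμν : ∀ ν ∈ νs, hsDiv β μ ν ≤ h) :
    hsDiv α (m • μ + νs.sum) (m • μ' + νs.sum) ≤ m * h := by
  refine hsDiv_le_iff.2 fun E hE => ?_
  set t := ENNReal.ofReal (α - 1)
  set σ := (νs.map fun ν => ν E).sum
  have hα1 : ENNReal.ofReal α = 1 + t := by
    rw [← ENNReal.ofReal_one, ← ENNReal.ofReal_add zero_le_one (by linarith), add_sub_cancel]
  have hcoef : ENNReal.ofReal β * m = m * ENNReal.ofReal α + t * card νs := by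
    rw [← ENNReal.ofReal_natCast, ← ENNReal.ofReal_natCast (card νs), ← ENNReal.ofReal_mul hβ.le,
      ← ENNReal.ofReal_mul (Nat.cast_nonneg _), ← ENNReal.ofReal_mul (by linarith),
      ← ENNReal.ofReal_add (by positivity) (by nlinarith), mul_comm β, hβm]
  -- average the bound against `μ'` (weight `m α`) and those against the `ν` (weight `α - 1`)
  have hscaled : ENNReal.ofReal β * (m * μ E)
      ≤ ENNReal.ofReal β * (m * h + m * ENNReal.ofReal α * μ' E + t * σ) :=
    calc ENNReal.ofReal β * (m * μ E)
        = m * ENNReal.ofReal α * μ E + t * (νs.map fun _ => μ E).sum := by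
          rw [map_const', sum_replicate, nsmul_eq_mul, ← mul_assoc, hcoef]; ring
      _ ≤ m * ENNReal.ofReal α * (h + ENNReal.ofReal β * μ' E)
          + t * (νs.map fun ν => h + ENNReal.ofReal β * ν E).sum := by
          gcongr
          · exact hsDiv_le_iff.1 hμμ' E hE
          · exact sum_map_le_sum_map _ _ fun ν hν => hsDiv_le_iff.1 (hμν ν hν) E hE
      _ = (m * ENNReal.ofReal α + t * card νs) * h
          + ENNReal.ofReal β * (m * ENNReal.ofReal α * μ' E + t * σ) := by
          rw [sum_map_add, map_const', sum_replicate, nsmul_eq_mul, sum_map_mul_left]; ring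
      _ = _ := by rw [← hcoef]; ring
  have hcancel := (ENNReal.mul_le_mul_iff_right (by simpa using hβ) ENNReal.ofReal_ne_top).1 hscaled
  rw [Measure.nsmul_add_multisetSum_apply, Measure.nsmul_add_multisetSum_apply]
  calc m * μ E + σ ≤ m * h + m * ENNReal.ofReal α * μ' E + t * σ + σ := by gcongr
    _ = m * h + ENNReal.ofReal α * (m * μ' E + σ) := by rw [hα1]; ring

theorem hsDiv_nsmul_add_sum_le_of_le_one {m : ℕ} {α β : ℝ} {h : ℝ≥0∞} {μ μ' : Measure Ω}
    {νs : Multiset (Measure Ω)} (hα0 : 0 ≤ α) (hα1 : α ≤ 1)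
    (hβm : (m + (1 - α) * card νs) * β = α * m) (hμμ' : hsDiv β μ μ' ≤ h)
    (hνμ' : ∀ ν ∈ νs, hsDiv β ν μ' ≤ h) :
    hsDiv α (m • μ + νs.sum) (m • μ' + νs.sum)
      ≤ ENNReal.ofReal (m + (1 - α) * card νs) * h := by
  refine hsDiv_le_iff.2 fun E hE => ?_
  set u := ENNReal.ofReal (1 - α)
  set σ := (νs.map fun ν => ν E).sum
  have hone : u + ENNReal.ofReal α = 1 := by
    rw [← ENNReal.ofReal_add (by linarith) hα0, sub_add_cancel, ENNReal.ofReal_one]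
  have hu : 0 ≤ 1 - α := by linarith
  have hd : ENNReal.ofReal (m + (1 - α) * card νs) = m + u * card νs := by
    rw [ENNReal.ofReal_add (by positivity) (by positivity), ENNReal.ofReal_mul hu,
      ENNReal.ofReal_natCast, ENNReal.ofReal_natCast]
  have hdβ : (m + u * card νs) * ENNReal.ofReal β = ENNReal.ofReal α * m := by
    rw [← hd, ← ENNReal.ofReal_mul (by positivity), hβm, ENNReal.ofReal_mul hα0,
      ENNReal.ofReal_natCast]
  rw [Measure.nsmul_add_multisetSum_apply, Measure.nsmul_add_multisetSum_apply, hd]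
  calc m * μ E + σ = m * μ E + u * σ + ENNReal.ofReal α * σ := by
        rw [add_assoc, ← add_mul, hone, one_mul]
    _ ≤ m * (h + ENNReal.ofReal β * μ' E)
        + u * (νs.map fun _ => h + ENNReal.ofReal β * μ' E).sum + ENNReal.ofReal α * σ := by
        gcongr
        · exact hsDiv_le_iff.1 hμμ' E hE
        · exact sum_map_le_sum_map _ _ fun ν hν => hsDiv_le_iff.1 (hνμ' ν hν) E hE
    _ = (m + u * card νs) * h + (m + u * card νs) * ENNReal.ofReal β * μ' E
        + ENNReal.ofReal α * σ := by
        rw [map_const', sum_replicate, nsmul_eq_mul]; ring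
    _ = (m + u * card νs) * h + ENNReal.ofReal α * (m * μ' E + σ) := by rw [hdβ]; ring

end HockeyStick

section Subsampling

open Multiset

variable {Z Ω Ω' : Type*} [MeasurableSpace Ω] [MeasurableSpace Ω']
  (M : Multiset Z → Measure Ω) (P Q : Measure Ω')

noncomputable def subsample (m : ℕ) (X : Multiset Z) : Measure Ω :=
  ((card X).choose m : ℝ≥0∞)⁻¹ • ((X.powersetCard m).map M).sum

def ConsDominated (C : Multiset Z) (k : ℕ) : Prop :=
  ∀ S ∈ C.powersetCard k, ∀ w w' : Z, ∀ β : ℝ, 0 ≤ β →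
    hsDiv β (M (w ::ₘ S)) (M (w' ::ₘ S)) ≤ hsDiv β P Q

theorem consDominated_of_dominates {k : ℕ}
    (hMprob : ∀ D : Multiset Z, card D = k + 1 → IsProbabilityMeasure (M D))
    [IsProbabilityMeasure P] [IsProbabilityMeasure Q]
    (hdom : ∀ D D' : Multiset Z, card D = k + 1 → card D' = k + 1 →
      (∃ C z z', z ≠ z' ∧ D = z ::ₘ C ∧ D' = z' ::ₘ C) →
      ∀ α : ℝ, 0 < α → hsDiv α (M D) (M D') ≤ hsDiv α P Q)
    (C : Multiset Z) : ConsDominated M P Q C k := by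
  intro S hS w w' β hβ
  have hcard : ∀ v, card (v ::ₘ S) = k + 1 := fun v => by
    rw [card_cons, (mem_powersetCard.1 hS).2]
  have := hMprob _ (hcard w)
  have := hMprob _ (hcard w')
  by_cases hww' : w = w'
  · subst hww'
    exact hsDiv_self_le β _ P Q
  rcases hβ.eq_or_lt with rfl | hβ
  · rw [hsDiv_zero, hsDiv_zero, measure_univ, measure_univ]
  · exact hdom _ _ (hcard w) (hcard w') ⟨S, w, w', hww', rfl, rfl⟩ β hβ

variable [DecidableEq Z] {C : Multiset Z} {k : ℕ}

theorem hsDiv_subsample_le (hk : k ≤ card C) (z z' : Z) (α : ℝ) (b : ℝ≥0∞)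
    (hb : ∀ S ∈ C.powersetCard k,
      hsDiv α ((k + 1) • M (z ::ₘ S) + ((C - S).map fun c => M (c ::ₘ S)).sum)
        ((k + 1) • M (z' ::ₘ S) + ((C - S).map fun c => M (c ::ₘ S)).sum) ≤ b) :
    hsDiv α (subsample M (k + 1) (z ::ₘ C)) (subsample M (k + 1) (z' ::ₘ C))
      ≤ ((card C + 1 : ℕ) : ℝ≥0∞)⁻¹ * b := by
  set K := (card C).choose k
  have hK : (K : ℝ≥0∞) ≠ 0 := by simpa using (Nat.choose_pos hk).ne'
  have hdecomp : ∀ w, subsample M (k + 1) (w ::ₘ C)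
      = (((card C + 1) * K : ℕ) : ℝ≥0∞)⁻¹ • ((C.powersetCard k).map fun S =>
          (k + 1) • M (w ::ₘ S) + ((C - S).map fun c => M (c ::ₘ S)).sum).sum := fun w => by
    rw [subsample, ← succ_nsmul_sum_powersetCard_cons, ← Nat.cast_smul_eq_nsmul ℝ≥0∞,
      smul_smul, card_cons, Nat.add_one_mul_choose_eq, Nat.cast_mul,
      ENNReal.mul_inv (by simp) (by simp), mul_assoc, ENNReal.inv_mul_cancel (by simp) (by simp), mul_one]
  rw [hdecomp, hdecomp]
  refine (hsDiv_smul_le _ _ _ _).trans ?_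
  calc _ ≤ (((card C + 1) * K : ℕ) : ℝ≥0∞)⁻¹ * (K * b) := by
        gcongr
        refine (hsDiv_multisetSum_le α _ _ _).trans ?_
        calc _ ≤ ((C.powersetCard k).map fun _ => b).sum := sum_map_le_sum_map _ _ hb
          _ = K * b := by rw [map_const', sum_replicate, card_powersetCard, nsmul_eq_mul]
    _ = ((card C + 1 : ℕ) : ℝ≥0∞)⁻¹ * b := by
        rw [Nat.cast_mul, ENNReal.mul_inv (by simp) (by simp), mul_assoc,
          ← mul_assoc _ (K : ℝ≥0∞), ENNReal.inv_mul_cancel hK (by simp), one_mul]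

theorem hsDiv_subsample_le_of_one_le (hk : k ≤ card C) (z z' : Z)
    (hpair : ConsDominated M P Q C k)
    {q : ℝ} (hq : q = ((k + 1 : ℕ) : ℝ) / ((card C + 1 : ℕ) : ℝ)) {α : ℝ} (hα : 1 ≤ α) :
    hsDiv α (subsample M (k + 1) (z ::ₘ C)) (subsample M (k + 1) (z' ::ₘ C))
      ≤ ENNReal.ofReal q * hsDiv ((α - (1 - q)) / q) P Q := by
  have hq0 : 0 < q := by rw [hq]; positivity
  set β := (α - (1 - q)) / q with hβ_def
  have hβ : 0 < β := div_pos (by linarith) hq0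
  refine (hsDiv_subsample_le M hk z z' α ((k + 1 : ℕ) * hsDiv β P Q) fun S hS => ?_).trans
    (le_of_eq ?_)
  · have hr : ((card (C - S) : ℕ) : ℝ) = card C - k := by
      rw [card_sub (mem_powersetCard.1 hS).1, (mem_powersetCard.1 hS).2, Nat.cast_sub hk]
    refine hsDiv_nsmul_add_sum_le_of_one_le hα hβ ?_ (hpair S hS z z' β hβ.le) ?_
    · rw [card_map, hr, hβ_def, hq]
      field_simp
      push_cast
      ring
    · simp only [mem_map]
      rintro _ ⟨c, -, rfl⟩
      exact hpair S hS z c β hβ.le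
  · rw [← mul_assoc, hq, ENNReal.ofReal_div_of_pos (by positivity), ENNReal.ofReal_natCast,
      ENNReal.ofReal_natCast, div_eq_mul_inv, mul_comm (((card C + 1 : ℕ) : ℝ≥0∞)⁻¹)]

theorem hsDiv_subsample_le_of_lt_one (hk : k ≤ card C) (z z' : Z)
    (hpair : ConsDominated M P Q C k)
    {q : ℝ} (hq : q = ((k + 1 : ℕ) : ℝ) / ((card C + 1 : ℕ) : ℝ)) {α : ℝ} (hα0 : 0 ≤ α)
    (hα1 : α < 1) :
    hsDiv α (subsample M (k + 1) (z ::ₘ C)) (subsample M (k + 1) (z' ::ₘ C))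
      ≤ ENNReal.ofReal (1 - α * (1 - q)) * hsDiv (α * q / (1 - α * (1 - q))) P Q := by
  have hq0 : 0 ≤ q := by rw [hq]; positivity
  have hq1 : q ≤ 1 := by
    rw [hq, div_le_one (by positivity)]
    exact_mod_cast Nat.succ_le_succ hk
  have hd : 0 < 1 - α * (1 - q) := by nlinarith
  set β := α * q / (1 - α * (1 - q)) with hβ_def
  have hβ : 0 ≤ β := by positivity
  set r := card C - k
  have hd' :
      ((k + 1 : ℕ) : ℝ) + (1 - α) * r = ((card C + 1 : ℕ) : ℝ) * (1 - α * (1 - q)) := by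
    rw [hq]
    field_simp
    push_cast [r, Nat.cast_sub hk]
    ring
  refine (hsDiv_subsample_le M hk z z' α
    (ENNReal.ofReal ((k + 1 : ℕ) + (1 - α) * r) * hsDiv β P Q) fun S hS => ?_).trans
    (le_of_eq ?_)
  · have hr : card ((C - S).map fun c => M (c ::ₘ S)) = r := by
      rw [card_map, card_sub (mem_powersetCard.1 hS).1, (mem_powersetCard.1 hS).2]
    rw [← hr]
    refine hsDiv_nsmul_add_sum_le_of_le_one hα0 hα1.le ?_ (hpair S hS z z' β hβ) ?_
    · rw [hr, hd', hβ_def]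
      field_simp
      rw [hq]
      field_simp
    · simp only [mem_map]
      rintro _ ⟨c, -, rfl⟩
      exact hpair S hS c z' β hβ
  · rw [← mul_assoc, hd', ENNReal.ofReal_mul (by positivity), ENNReal.ofReal_natCast,
      ← mul_assoc, ENNReal.inv_mul_cancel (by simp) (by simp), one_mul]

end Subsampling

theorem stmt_14_general {Zt Ω Ω' : Type*} [MeasurableSpace Ω] [MeasurableSpace Ω']
    (m n : ℕ) (hm : 0 < m) (hmn : m ≤ n)
    (M : Multiset Zt → Measure Ω)
    (hMprob : ∀ D : Multiset Zt, Multiset.card D = m → IsProbabilityMeasure (M D))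
    (P Q : Measure Ω') [IsProbabilityMeasure P] [IsProbabilityMeasure Q]
    (hdom : ∀ D D' : Multiset Zt, Multiset.card D = m → Multiset.card D' = m →
      (∃ C z z', z ≠ z' ∧ D = z ::ₘ C ∧ D' = z' ::ₘ C) →
      ∀ α : ℝ, 0 < α → hsDiv α (M D) (M D') ≤ hsDiv α P Q)
    (Msub : Multiset Zt → Measure Ω)
    (hMsub : ∀ X : Multiset Zt,
      Msub X = ((n.choose m : ENNReal))⁻¹ • ((X.powersetCard m).map M).sum)
    (X Y : Multiset Zt) (hX : Multiset.card X = n)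
    (hXY : ∃ C z z', z ≠ z' ∧ X = z ::ₘ C ∧ Y = z' ::ₘ C) :
    (∀ α : ℝ, 1 ≤ α →
      hsDiv α (Msub X) (Msub Y) ≤
        hsDiv α (ENNReal.ofReal ((m : ℝ) / n) • P + ENNReal.ofReal (1 - (m : ℝ) / n) • Q)
          Q) ∧
    (∀ α : ℝ, 0 ≤ α → α < 1 →
      hsDiv α (Msub X) (Msub Y) ≤
        hsDiv α P
          (ENNReal.ofReal ((m : ℝ) / n) • Q + ENNReal.ofReal (1 - (m : ℝ) / n) • P)) := by
  classical
  obtain ⟨C, z, z', -, rfl, rfl⟩ := hXY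
  obtain ⟨k, rfl⟩ := Nat.exists_eq_add_one_of_ne_zero hm.ne'
  obtain rfl : n = Multiset.card C + 1 := by simpa using hX.symm
  have hk : k ≤ Multiset.card C := by omega
  have hpair := consDominated_of_dominates M P Q hMprob hdom C
  have hq0 : 0 < ((k + 1 : ℕ) : ℝ) / ((Multiset.card C + 1 : ℕ) : ℝ) := by positivity
  have hq1 : ((k + 1 : ℕ) : ℝ) / ((Multiset.card C + 1 : ℕ) : ℝ) ≤ 1 :=
    div_le_one_of_le₀ (by exact_mod_cast hmn) (Nat.cast_nonneg _)
  have hsub : ∀ w, Msub (w ::ₘ C) = subsample M (k + 1) (w ::ₘ C) := fun w => by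
    rw [hMsub, subsample, Multiset.card_cons]
  simp only [hsub]
  refine ⟨fun α hα => ?_, fun α hα0 hα1 => ?_⟩
  · rw [hsDiv_mix_left hq0 hq1 (by linarith) P Q]
    exact hsDiv_subsample_le_of_one_le M P Q hk z z' hpair rfl hα
  · rw [hsDiv_mix_right hq0.le hq1 hα0 hα1 P Q]
    exact hsDiv_subsample_le_of_lt_one M P Q hk z z' hpair rfl hα0 hα1

/-- Privacy amplification by subsampling without replacement (substitute relation):
if `(P, Q)` dominates the mechanism `M` on datasets of `m` records, then the subsampled
mechanism `Msub X = (1/C(n,m)) ∑_{S ⊆ X, |S| = m} M(S)` on datasets of `n` records is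
dominated by `(q P + (1-q) Q, Q)` for `α ≥ 1` and by `(P, q Q + (1-q) P)` for `0 ≤ α < 1`,
where `q = m/n`. Datasets are multisets, and two datasets are neighboring when they
differ in exactly one entry. -/
theorem stmt_14 {Zt Ω Ω' : Type*} [MeasurableSpace Ω] [MeasurableSpace Ω']
    (m n : ℕ) (hm : 0 < m) (hmn : m ≤ n)
    (M : Multiset Zt → Measure Ω)
    (hMprob : ∀ D : Multiset Zt, Multiset.card D = m → IsProbabilityMeasure (M D))
    (P Q : Measure Ω') [IsProbabilityMeasure P] [IsProbabilityMeasure Q]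
    (hdom : ∀ D D' : Multiset Zt, Multiset.card D = m → Multiset.card D' = m →
      (∃ C z z', z ≠ z' ∧ D = z ::ₘ C ∧ D' = z' ::ₘ C) →
      ∀ α : ℝ, 0 < α → hsDiv α (M D) (M D') ≤ hsDiv α P Q)
    (Msub : Multiset Zt → Measure Ω)
    (hMsub : ∀ X : Multiset Zt,
      Msub X = ((n.choose m : ENNReal))⁻¹ • ((X.powersetCard m).map M).sum)
    (X Y : Multiset Zt) (hX : Multiset.card X = n) (hY : Multiset.card Y = n)
    (hXY : ∃ C z z', z ≠ z' ∧ X = z ::ₘ C ∧ Y = z' ::ₘ C) :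
    (∀ α : ℝ, 1 ≤ α →
      hsDiv α (Msub X) (Msub Y) ≤
        hsDiv α (ENNReal.ofReal ((m : ℝ) / n) • P + ENNReal.ofReal (1 - (m : ℝ) / n) • Q)
          Q) ∧
    (∀ α : ℝ, 0 ≤ α → α < 1 →
      hsDiv α (Msub X) (Msub Y) ≤
        hsDiv α P
          (ENNReal.ofReal ((m : ℝ) / n) • Q + ENNReal.ofReal (1 - (m : ℝ) / n) • P)) :=
  stmt_14_general m n hm hmn M hMprob P Q hdom Msub hMsub X Y hX hXY
end
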